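/- arXiv:2302.13597 — 5 statements merged into one kernel-verified Lean document; each statement's English description precedes it below -/
import Mathlib

section
/- The unit cube C = [0,1]³ in ℝ³ is not difference-separable: there exist two translates C₁ and C₂ of C such that no plane strictly separates C₁ \ C₂ from C₂ \ C₁. Concretely, for C₁ = [0,1]³ and C₂ = [0,1]³ + (1/2, 1/2, 1/2), there is no nonzero w ∈ ℝ³ and c ∈ ℝ with ⟪w, x⟫ < c for all x ∈ C₁ \ C₂ and ⟪w, y⟫ > c for all y ∈ C₂ \ C₁. -/
open RealInnerProductSpace

/-- The unit cube in `ℝ³` is not difference-separable: no plane strictly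
separates `C₁ \ C₂` from `C₂ \ C₁` where `C₁ = [0,1]³` and
`C₂ = [0,1]³ + (1/2,1/2,1/2)`. -/
theorem stmt_2 :
    ¬ ∃ (w : EuclideanSpace ℝ (Fin 3)) (c : ℝ), w ≠ 0 ∧
      (∀ x ∈ {x : EuclideanSpace ℝ (Fin 3) | ∀ i, x i ∈ Set.Icc (0:ℝ) 1} \
             {x : EuclideanSpace ℝ (Fin 3) | ∀ i, x i ∈ Set.Icc (1/2 : ℝ) (3/2)},
        ⟪w, x⟫ < c) ∧
      (∀ y ∈ {x : EuclideanSpace ℝ (Fin 3) | ∀ i, x i ∈ Set.Icc (1/2 : ℝ) (3/2)} \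
             {x : EuclideanSpace ℝ (Fin 3) | ∀ i, x i ∈ Set.Icc (0:ℝ) 1},
        c < ⟪w, y⟫) := by
  rintro ⟨w, c, -, hA, hB⟩
  -- points in C₁ \ C₂
  set a0 : EuclideanSpace ℝ (Fin 3) := (WithLp.equiv 2 (Fin 3 → ℝ)).symm ![1, 1, 0] with ha0
  set a1 : EuclideanSpace ℝ (Fin 3) := (WithLp.equiv 2 (Fin 3 → ℝ)).symm ![1, 1, 1/4] with ha1
  set a2 : EuclideanSpace ℝ (Fin 3) := (WithLp.equiv 2 (Fin 3 → ℝ)).symm ![1/4, 1, 1] with ha2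
  set a3 : EuclideanSpace ℝ (Fin 3) := (WithLp.equiv 2 (Fin 3 → ℝ)).symm ![1, 1/4, 1] with ha3
  -- points in C₂ \ C₁
  set b0 : EuclideanSpace ℝ (Fin 3) := (WithLp.equiv 2 (Fin 3 → ℝ)).symm ![3/2, 3/2, 1/2] with hb0
  set b1 : EuclideanSpace ℝ (Fin 3) := (WithLp.equiv 2 (Fin 3 → ℝ)).symm ![9/8, 1/2, 1/2] with hb1
  set b2 : EuclideanSpace ℝ (Fin 3) := (WithLp.equiv 2 (Fin 3 → ℝ)).symm ![1/2, 9/8, 1/2] with hb2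
  set b3 : EuclideanSpace ℝ (Fin 3) := (WithLp.equiv 2 (Fin 3 → ℝ)).symm ![1/2, 1/2, 9/8] with hb3
  have hA0 : ⟪w, a0⟫ < c := by
    refine hA a0 ⟨fun i => ?_, fun h => ?_⟩
    · fin_cases i <;> simp [ha0] <;> norm_num
    · have := h 2; simp [ha0] at this; norm_num at this
  have hA1 : ⟪w, a1⟫ < c := by
    refine hA a1 ⟨fun i => ?_, fun h => ?_⟩
    · fin_cases i <;> simp [ha1] <;> norm_num
    · have := h 2; simp [ha1] at this; norm_num at this
  have hA2 : ⟪w, a2⟫ < c := by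
    refine hA a2 ⟨fun i => ?_, fun h => ?_⟩
    · fin_cases i <;> simp [ha2] <;> norm_num
    · have := h 0; simp [ha2] at this; norm_num at this
  have hA3 : ⟪w, a3⟫ < c := by
    refine hA a3 ⟨fun i => ?_, fun h => ?_⟩
    · fin_cases i <;> simp [ha3] <;> norm_num
    · have := h 1; simp [ha3] at this; norm_num at this
  have hB0 : c < ⟪w, b0⟫ := by
    refine hB b0 ⟨fun i => ?_, fun h => ?_⟩
    · fin_cases i <;> simp [hb0] <;> norm_num
    · have := h 0; simp [hb0] at this; norm_num at this
  have hB1 : c < ⟪w, b1⟫ := by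
    refine hB b1 ⟨fun i => ?_, fun h => ?_⟩
    · fin_cases i <;> simp [hb1] <;> norm_num
    · have := h 0; simp [hb1] at this; norm_num at this
  have hB2 : c < ⟪w, b2⟫ := by
    refine hB b2 ⟨fun i => ?_, fun h => ?_⟩
    · fin_cases i <;> simp [hb2] <;> norm_num
    · have := h 1; simp [hb2] at this; norm_num at this
  have hB3 : c < ⟪w, b3⟫ := by
    refine hB b3 ⟨fun i => ?_, fun h => ?_⟩
    · fin_cases i <;> simp [hb3] <;> norm_num
    · have := h 2; simp [hb3] at this; norm_num at this
  simp only [ha0, ha1, ha2, ha3, hb0, hb1, hb2, hb3, PiLp.inner_apply,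
    RCLike.inner_apply, conj_trivial, Fin.sum_univ_three,
    WithLp.equiv_symm_apply, PiLp.toLp_apply, Matrix.cons_val_zero, Matrix.cons_val_one,
    Matrix.head_cons, Matrix.cons_val_two, Matrix.tail_cons] at hA0 hA1 hA2 hA3 hB0 hB1 hB2 hB3
  linarith
end

section
/- Let h₁, ..., h_d be hyperplanes in ℝᵈ given by hᵢ = {x : ⟪wᵢ,x⟫ = cᵢ} with nonzero normals wᵢ. If the wᵢ are linearly dependent, then the number of sign patterns realized by points of ℝᵈ with respect to these hyperplanes is strictly less than 2ᵈ; i.e., the map x ↦ (sign(⟪w₁,x⟫ - c₁), ..., sign(⟪w_d,x⟫ - c_d)) restricted to points avoiding all hyperplanes attains fewer than 2ᵈ distinct values in {-1,+1}ᵈ. -/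
open RealInnerProductSpace

/-- If the normals `w₁,…,w_d` of `d` hyperplanes in `ℝᵈ` are linearly
dependent, then points avoiding all hyperplanes realize strictly fewer than
`2^d` sign patterns. -/
theorem stmt_6 {d : ℕ} (w : Fin d → EuclideanSpace ℝ (Fin d))
    (c : Fin d → ℝ) (hw0 : ∀ i, w i ≠ 0)
    (hdep : ¬ LinearIndependent ℝ w) :
    Set.ncard {σ : Fin d → ℤ |
      ∃ x : EuclideanSpace ℝ (Fin d),
        (∀ i, ⟪w i, x⟫ ≠ c i) ∧
        (∀ i, σ i = if c i < ⟪w i, x⟫ then 1 else -1)} < 2 ^ d := by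
  classical
  obtain ⟨g, hgsum, j, hj⟩ := Fintype.not_linearIndependent_iff.mp hdep
  -- normalize so that ∑ a i * c i ≥ 0
  obtain ⟨a, hasum, haj, hac⟩ :
      ∃ a : Fin d → ℝ, (∑ i, a i • w i) = 0 ∧ a j ≠ 0 ∧ 0 ≤ ∑ i, a i * c i := by
    by_cases hs : 0 ≤ ∑ i, g i * c i
    · exact ⟨g, hgsum, hj, hs⟩
    · refine ⟨fun i => -g i, ?_, by simpa using hj, ?_⟩
      · simp [neg_smul, Finset.sum_neg_distrib, hgsum]
      · have : (∑ i, -g i * c i) = -∑ i, g i * c i := by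
          simp [neg_mul, Finset.sum_neg_distrib]
        rw [this]
        linarith
  set σ₀ : Fin d → ℤ := fun i => if 0 ≤ a i then 1 else -1 with hσ₀
  set S : Set (Fin d → ℤ) := {σ : Fin d → ℤ |
      ∃ x : EuclideanSpace ℝ (Fin d),
        (∀ i, ⟪w i, x⟫ ≠ c i) ∧
        (∀ i, σ i = if c i < ⟪w i, x⟫ then 1 else -1)} with hS
  set T : Set (Fin d → ℤ) :=
    ↑(Fintype.piFinset fun _ : Fin d => ({-1, 1} : Finset ℤ)) with hT
  have hST : S ⊆ T := by
    rintro σ ⟨x, hx, hσ⟩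
    simp only [hT, Finset.coe_sort_coe, Finset.mem_coe, Fintype.mem_piFinset,
      Finset.mem_insert, Finset.mem_singleton]
    intro i
    rw [hσ i]
    split <;> simp
  have hσ₀T : σ₀ ∈ T := by
    simp only [hT, Finset.mem_coe, Fintype.mem_piFinset, Finset.mem_insert,
      Finset.mem_singleton]
    intro i
    simp only [hσ₀]
    split <;> simp
  have hσ₀S : σ₀ ∉ S := by
    rintro ⟨x, hx, hσ⟩
    -- ∑ a i * ⟪w i, x⟫ = 0
    have hinner : (∑ i, a i * ⟪w i, x⟫) = 0 := by
      have h0 := congrArg (fun v : EuclideanSpace ℝ (Fin d) => (⟪v, x⟫ : ℝ)) hasum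
      simp only [sum_inner, real_inner_smul_left, inner_zero_left] at h0
      exact h0
    have hterm : ∀ i, 0 ≤ a i * (⟪w i, x⟫ - c i) := by
      intro i
      have h := hσ i
      rcases le_or_gt 0 (a i) with hpos | hneg
      · have : c i < ⟪w i, x⟫ := by
          by_contra hcon
          simp only [hσ₀, if_pos hpos, if_neg hcon] at h
          norm_num at h
        nlinarith
      · have : ¬ c i < ⟪w i, x⟫ := by
          by_contra hcon
          simp only [hσ₀, if_neg (not_le.mpr hneg), if_pos hcon] at h
          norm_num at h
        have hlt : ⟪w i, x⟫ < c i := lt_of_le_of_ne (not_lt.mp this) (hx i)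
        nlinarith
    have htermj : 0 < a j * (⟪w j, x⟫ - c j) := by
      have h := hσ j
      rcases lt_or_gt_of_ne haj with hneg | hpos
      · have : ¬ c j < ⟪w j, x⟫ := by
          by_contra hcon
          simp only [hσ₀, if_neg (not_le.mpr hneg), if_pos hcon] at h
          norm_num at h
        have hlt : ⟪w j, x⟫ < c j := lt_of_le_of_ne (not_lt.mp this) (hx j)
        nlinarith
      · have : c j < ⟪w j, x⟫ := by
          by_contra hcon
          simp only [hσ₀, if_pos hpos.le, if_neg hcon] at h
          norm_num at h
        nlinarith
    have hsumpos : 0 < ∑ i, a i * (⟪w i, x⟫ - c i) :=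
      Finset.sum_pos' (fun i _ => hterm i) ⟨j, Finset.mem_univ j, htermj⟩
    have hexp : (∑ i, a i * (⟪w i, x⟫ - c i)) = -∑ i, a i * c i := by
      have hsplit : (∑ i, a i * (⟪w i, x⟫ - c i))
          = (∑ i, a i * ⟪w i, x⟫) - ∑ i, a i * c i := by
        rw [← Finset.sum_sub_distrib]
        exact Finset.sum_congr rfl fun i _ => by ring
      rw [hsplit, hinner]
      ring
    rw [hexp] at hsumpos
    linarith
  have hfin : T.Finite := (Fintype.piFinset fun _ : Fin d => ({-1, 1} : Finset ℤ)).finite_toSet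
  have hssub : S ⊂ T := ⟨hST, fun h => hσ₀S (h hσ₀T)⟩
  have hlt := Set.ncard_lt_ncard hssub hfin
  have hTcard : T.ncard = 2 ^ d := by
    rw [hT, Set.ncard_coe_finset, Fintype.card_piFinset]
    simp
  rw [hTcard] at hlt
  exact hlt
end

section
/- If 3ᵈ points in ℝᵈ have pairwise distinct containment patterns with respect to 2d halfspaces forming d pairs of parallel twin hyperplanes, then the normals w₁, ..., w_d of the twin pairs are linearly independent. -/
open RealInnerProductSpace

private lemma trit_dec0 {a ca ca' : ℝ}
    (h : (if ca ≤ a then if a ≤ ca' then (1 : Fin 3) else 2 else 0) = 0) : a < ca := by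
  split_ifs at h with h1 h2
  · exact absurd h (by decide)
  · exact absurd h (by decide)
  · exact lt_of_not_ge h1

private lemma trit_dec2 {a ca ca' : ℝ}
    (h : (if ca ≤ a then if a ≤ ca' then (1 : Fin 3) else 2 else 0) = 2) : ca' < a := by
  split_ifs at h with h1 h2
  · exact absurd h (by decide)
  · exact lt_of_not_ge h2
  · exact absurd h (by decide)

private lemma trit_inj {a b ca ca' : ℝ} (hc : ca ≤ ca')
    (h : (if ca ≤ a then if a ≤ ca' then (1 : Fin 3) else 2 else 0)
       = (if ca ≤ b then if b ≤ ca' then (1 : Fin 3) else 2 else 0)) :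
    (ca ≤ a ↔ ca ≤ b) ∧ (a ≤ ca' ↔ b ≤ ca') := by
  split_ifs at h with h1 h2 h3 h4 h5 h6 h7 <;>
    first
      | exact absurd h (by decide)
      | (constructor <;> constructor <;> intro hx <;> first | assumption | linarith

)

/-- If `3^d` points in `ℝᵈ` have pairwise distinct containment patterns with
respect to `2d` halfspaces forming `d` twin pairs
`{x | cᵢ ≤ ⟪wᵢ,x⟫}` and `{x | ⟪wᵢ,x⟫ ≤ cᵢ'}`, then the normals
`w₁,…,w_d` are linearly independent. -/
theorem stmt_9 {d : ℕ} (w : Fin d → EuclideanSpace ℝ (Fin d))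
    (c c' : Fin d → ℝ) (hw0 : ∀ i, w i ≠ 0) (hcc : ∀ i, c i ≤ c' i)
    (p : Fin (3 ^ d) → EuclideanSpace ℝ (Fin d))
    (hdistinct : ∀ j k : Fin (3 ^ d),
      (∀ i, (c i ≤ ⟪w i, p j⟫ ↔ c i ≤ ⟪w i, p k⟫) ∧
            (⟪w i, p j⟫ ≤ c' i ↔ ⟪w i, p k⟫ ≤ c' i)) → j = k) :
    LinearIndependent ℝ w := by
  rw [Fintype.linearIndependent_iff]
  intro g hg
  by_contra hne
  push_neg at hne
  obtain ⟨i0, hi0⟩ := hne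
  -- trit encoding of patterns
  set f : Fin (3 ^ d) → (Fin d → Fin 3) := fun j i =>
    if c i ≤ ⟪w i, p j⟫ then (if ⟪w i, p j⟫ ≤ c' i then 1 else 2) else 0 with hf
  have hinj : Function.Injective f := fun j k hjk =>
    hdistinct j k fun i => trit_inj (hcc i) (congrFun hjk i)
  have hsurj : Function.Surjective f := by
    have hbij := (Fintype.bijective_iff_injective_and_card f).2
      ⟨hinj, by simp [Fintype.card_fun]⟩
    exact hbij.2
  -- the two extreme patterns
  obtain ⟨j, hj⟩ := hsurj (fun i => if 0 < g i then 2 else if g i < 0 then 0 else 1)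
  obtain ⟨k, hk⟩ := hsurj (fun i => if 0 < g i then 0 else if g i < 0 then 2 else 1)
  have key : ∀ m, ∑ i, g i * ⟪w i, p m⟫ = 0 := by
    intro m
    have : ⟪∑ i, g i • w i, p m⟫ = 0 := by rw [hg, inner_zero_left]
    rw [sum_inner] at this
    simp only [real_inner_smul_left] at this
    exact this
  set s : Fin d → ℝ := fun i => if 0 < g i then c' i else c i with hs
  set s' : Fin d → ℝ := fun i => if 0 < g i then c i else c' i with hs'
  -- decode patterns: point j exceeds s where g ≠ 0
  have hjle : ∀ i, g i ≠ 0 → g i * s i < g i * ⟪w i, p j⟫ := by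
    intro i hgne
    have h := congrFun hj i
    rcases lt_trichotomy (g i) 0 with hgi | hgi | hgi
    · rw [if_neg (not_lt.2 hgi.le), if_pos hgi] at h
      have hlt : ⟪w i, p j⟫ < c i := trit_dec0 h
      simp only [hs, if_neg (not_lt.2 hgi.le)]
      exact mul_lt_mul_of_neg_left hlt hgi
    · exact absurd hgi hgne
    · rw [if_pos hgi] at h
      have hlt : c' i < ⟪w i, p j⟫ := trit_dec2 h
      simp only [hs, if_pos hgi]
      exact mul_lt_mul_of_pos_left hlt hgi
  have hjle' : ∀ i, g i * s i ≤ g i * ⟪w i, p j⟫ := by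
    intro i
    by_cases hgne : g i = 0
    · simp only [hgne, zero_mul]; exact le_rfl
    · exact (hjle i hgne).le
  have hkle : ∀ i, g i * ⟪w i, p k⟫ ≤ g i * s' i := by
    intro i
    have h := congrFun hk i
    rcases lt_trichotomy (g i) 0 with hgi | hgi | hgi
    · rw [if_neg (not_lt.2 hgi.le), if_pos hgi] at h
      have hlt : c' i < ⟪w i, p k⟫ := trit_dec2 h
      simp only [hs', if_neg (not_lt.2 hgi.le)]
      exact (mul_lt_mul_of_neg_left hlt hgi).le
    · simp only [hgi, zero_mul]; exact le_rfl
    · rw [if_pos hgi] at h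
      have hlt : ⟪w i, p k⟫ < c i := trit_dec0 h
      simp only [hs', if_pos hgi]
      exact (mul_lt_mul_of_pos_left hlt hgi).le
  have hss : ∀ i, g i * s' i ≤ g i * s i := by
    intro i
    rcases lt_trichotomy (g i) 0 with hgi | hgi | hgi
    · simp only [hs, hs', if_neg (not_lt.2 hgi.le)]
      exact mul_le_mul_of_nonpos_left (hcc i) hgi.le
    · simp only [hgi, zero_mul]; exact le_rfl
    · simp only [hs, hs', if_pos hgi]
      exact mul_le_mul_of_nonneg_left (hcc i) hgi.le
  have h1 : ∑ i, g i * ⟪w i, p k⟫ ≤ ∑ i, g i * s' i :=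
    Finset.sum_le_sum fun i _ => hkle i
  have h2 : ∑ i, g i * s' i ≤ ∑ i, g i * s i :=
    Finset.sum_le_sum fun i _ => hss i
  have h3 : ∑ i, g i * s i < ∑ i, g i * ⟪w i, p j⟫ :=
    Finset.sum_lt_sum (fun i _ => hjle' i) ⟨i0, Finset.mem_univ _, hjle i0 hi0⟩
  have hk0 := key k
  have hj0 := key j
  linarith
end

section
/- Let p₁, ..., p_d be hyperplanes in ℝᵈ with linearly independent normals intersecting in a single point I, and let p' be a further hyperplane with I ∉ p'. Consider the d lines formed by intersections of the (d-1)-element subsets of {p₁,...,p_d}; each such line is a union of two closed rays starting at I. Then p' intersects at most one of the two rays of each line, and there is a choice of one ray per line, none of which meets p', such that the convex cone generated by these d rays (with apex I) is disjoint from p' and hence contained in the open halfspace bounded by p' that contains I. -/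
open RealInnerProductSpace

/-- Let `p₁,…,p_d` be hyperplanes with linearly independent normals meeting
in the single point `I`, and `p'` a further hyperplane not containing `I`.
Each of the `d` intersection lines of `d-1` of the hyperplanes is a union of
two rays from `I`, of which `p'` can intersect at most one; moreover one can
choose one ray per line, avoiding `p'`, such that the convex cone they
generate is disjoint from `p'` and contained in the open halfspace bounded
by `p'` that contains `I`. -/
theorem stmt_10 {d : ℕ} (w : Fin d → EuclideanSpace ℝ (Fin d))
    (c : Fin d → ℝ) (hw : LinearIndependent ℝ w)
    (w' : EuclideanSpace ℝ (Fin d)) (c' : ℝ) (hw' : w' ≠ 0)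
    (I : EuclideanSpace ℝ (Fin d)) (hI : ∀ i, ⟪w i, I⟫ = c i)
    (hI' : ⟪w', I⟫ ≠ c') :
    (∀ j : Fin d, ∀ u : EuclideanSpace ℝ (Fin d), u ≠ 0 →
      (∀ i, i ≠ j → ⟪w i, u⟫ = 0) →
      ¬ ((∃ l : ℝ, 0 ≤ l ∧ ⟪w', I + l • u⟫ = c') ∧
         (∃ m : ℝ, 0 ≤ m ∧ ⟪w', I - m • u⟫ = c'))) ∧
    ∃ v : Fin d → EuclideanSpace ℝ (Fin d),
      (∀ j, v j ≠ 0) ∧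
      (∀ j i, i ≠ j → ⟪w i, v j⟫ = 0) ∧
      (∀ j, ∀ l : ℝ, 0 ≤ l → ⟪w', I + l • v j⟫ ≠ c') ∧
      (∀ lam : Fin d → ℝ, (∀ j, 0 ≤ lam j) →
        ⟪w', I + ∑ j, lam j • v j⟫ ≠ c' ∧
        (⟪w', I⟫ < c' → ⟪w', I + ∑ j, lam j • v j⟫ < c') ∧
        (c' < ⟪w', I⟫ → c' < ⟪w', I + ∑ j, lam j • v j⟫)) := by
  constructor
  · rintro j u hu horth ⟨⟨l, hl, hl'⟩, ⟨m, hm, hm'⟩⟩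
    have h1 : ⟪w', I⟫ + l * ⟪w', u⟫ = c' := by
      rw [inner_add_right, real_inner_smul_right] at hl'; exact hl'
    have h2 : ⟪w', I⟫ - m * ⟪w', u⟫ = c' := by
      rw [inner_sub_right, real_inner_smul_right] at hm'; exact hm'
    rcases eq_or_ne ⟪w', u⟫ 0 with h | h
    · exact hI' (by rw [h] at h1; linarith)
    · have ht : (l + m) * ⟪w', u⟫ = 0 := by linarith
      have hlm : l + m = 0 := by
        rcases mul_eq_zero.mp ht with h' | h'
        · exact h'
        · exact absurd h' h
      have hl0 : l = 0 := by linarith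
      exact hI' (by rw [hl0] at h1; linarith)
  · have hspan : Submodule.span ℝ (Set.range w) = ⊤ :=
      hw.span_eq_top_of_card_eq_finrank' (by simp)
    let T : EuclideanSpace ℝ (Fin d) →ₗ[ℝ] (Fin d → ℝ) :=
      LinearMap.pi (fun i => (innerSL ℝ (w i)).toLinearMap)
    have hTinj : Function.Injective T := by
      rw [← LinearMap.ker_eq_bot, Submodule.eq_bot_iff]
      intro x hx
      have hx' : ∀ i, ⟪w i, x⟫ = 0 := fun i => congrFun hx i
      have hall : ∀ y ∈ Submodule.span ℝ (Set.range w), ⟪y, x⟫ = 0 := by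
        intro y hy
        induction hy using Submodule.span_induction with
        | mem y hy => obtain ⟨i, rfl⟩ := hy; exact hx' i
        | zero => simp
        | add a b _ _ ha hb => rw [inner_add_left, ha, hb]; ring
        | smul r a _ ha => rw [real_inner_smul_left, ha]; ring
      exact inner_self_eq_zero.mp (hall x (hspan ▸ Submodule.mem_top))
    have hTsurj : Function.Surjective T :=
      (LinearMap.injective_iff_surjective_of_finrank_eq_finrank (by simp)).mp hTinj
    have hex : ∀ j : Fin d, ∃ b, ∀ i, ⟪w i, b⟫ = if i = j then (1:ℝ) else 0 := by
      intro j
      obtain ⟨b, hb⟩ := hTsurj (Pi.single j 1)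
      exact ⟨b, fun i => by simpa [T, Pi.single_apply] using congrFun hb i⟩
    choose b hb using hex
    set e := c' - ⟪w', I⟫ with he
    have he0 : e ≠ 0 := sub_ne_zero.mpr (Ne.symm hI')
    set s : Fin d → ℝ := fun j => if ⟪w', b j⟫ * e > 0 then -1 else 1 with hs
    have hs0 : ∀ j, s j ≠ 0 := by
      intro j; rw [hs]; dsimp only; split_ifs <;> norm_num
    set v : Fin d → EuclideanSpace ℝ (Fin d) := fun j => s j • b j with hv
    have hvw : ∀ j i, ⟪w i, v j⟫ = s j * (if i = j then (1:ℝ) else 0) := by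
      intro j i; rw [hv]; simp only [real_inner_smul_right, hb]
    have hkey : ∀ j, ⟪w', v j⟫ * e ≤ 0 := by
      intro j
      rw [hv]; simp only [real_inner_smul_right]
      rw [hs]; dsimp only
      by_cases h : ⟪w', b j⟫ * e > 0
      · rw [if_pos h]; nlinarith
      · rw [if_neg h]; push_neg at h; nlinarith
    refine ⟨v, ?_, ?_, ?_, ?_⟩
    · intro j hz
      have h1 : ⟪w j, v j⟫ = s j := by rw [hvw]; simp
      rw [hz, inner_zero_right] at h1
      exact hs0 j h1.symm
    · intro j i hij
      rw [hvw]; simp [hij]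
    · intro j l hl hcon
      rw [inner_add_right, real_inner_smul_right] at hcon
      have := hkey j
      have hIe : ⟪w', I⟫ = c' - e := by rw [he]; ring
      have hlX : l * ⟪w', v j⟫ = e := by linarith
      have hee : e * e ≤ 0 := by
        calc e * e = l * (⟪w', v j⟫ * e) := by rw [← hlX]; ring
          _ ≤ 0 := mul_nonpos_of_nonneg_of_nonpos hl this
      nlinarith [mul_self_pos.mpr he0]
    · intro lam hlam
      have hsum : ⟪w', ∑ j, lam j • v j⟫ = ∑ j, lam j * ⟪w', v j⟫ := by
        rw [inner_sum]
        exact Finset.sum_congr rfl fun j _ => by rw [real_inner_smul_right]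
      have ht : (∑ j, lam j * ⟪w', v j⟫) * e ≤ 0 := by
        rw [Finset.sum_mul]
        apply Finset.sum_nonpos
        intro j _
        have : lam j * ⟪w', v j⟫ * e = lam j * (⟪w', v j⟫ * e) := by ring
        rw [this]
        exact mul_nonpos_of_nonneg_of_nonpos (hlam j) (hkey j)
      set t := ∑ j, lam j * ⟪w', v j⟫ with hts
      have hval : ⟪w', I + ∑ j, lam j • v j⟫ = (c' - e) + t := by
        rw [inner_add_right, hsum]; rw [he]; ring
      refine ⟨?_, ?_, ?_⟩
      · intro hcon
        rw [hval] at hcon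
        have hte : t = e := by linarith
        rw [hte] at ht
        exact absurd ht (not_le.mpr (mul_self_pos.mpr he0))
      · intro hlt; rw [hval]
        have hepos : 0 < e := by rw [he]; linarith
        nlinarith
      · intro hlt; rw [hval]
        have heneg : e < 0 := by rw [he]; linarith
        nlinarith
end

section
/- Let C ⊆ ℝᵈ be convex and bi-curved. Then C is bounded. -/
open RealInnerProductSpace

/-- An unbounded closed convex set in a finite-dimensional space contains a ray
from any of its points. -/
lemma exists_ray_of_unbounded {E : Type*} [NormedAddCommGroup E] [NormedSpace ℝ E]
    [FiniteDimensional ℝ E] {K : Set E} (hK : Convex ℝ K) (hcl : IsClosed K)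
    (hub : ¬ Bornology.IsBounded K) {p : E} (hp : p ∈ K) :
    ∃ u : E, ‖u‖ = 1 ∧ ∀ t : ℝ, 0 ≤ t → p + t • u ∈ K := by
  have h : ∀ n : ℕ, ∃ x ∈ K, (n : ℝ) < ‖x - p‖ := by
    intro n
    by_contra hcon
    push_neg at hcon
    exact hub ((Metric.isBounded_closedBall (x := p) (r := n)).subset
      (fun x hx => by simpa [Metric.mem_closedBall, dist_eq_norm] using hcon x hx))
  choose x hxK hxn using h
  have hpos : ∀ n : ℕ, (0:ℝ) < ‖x n - p‖ := fun n =>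
    lt_of_le_of_lt (Nat.cast_nonneg n) (hxn n)
  set u : ℕ → E := fun n => ‖x n - p‖⁻¹ • (x n - p) with hu
  have husphere : ∀ n, u n ∈ Metric.sphere (0:E) 1 := by
    intro n
    simp [u, norm_smul, abs_of_pos (inv_pos.2 (hpos n)), inv_mul_cancel₀ (hpos n).ne']
  obtain ⟨w, hw, φ, hφ, hconv⟩ :=
    (isCompact_sphere (0:E) 1).tendsto_subseq husphere
  have hwnorm : ‖w‖ = 1 := by simpa using hw
  refine ⟨w, hwnorm, fun t ht => ?_⟩
  have htend : Filter.Tendsto (fun n => p + t • u (φ n)) Filter.atTop (nhds (p + t • w)) :=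
    ((hconv.const_smul t).const_add p)
  refine hcl.mem_of_tendsto htend ?_
  filter_upwards [Filter.eventually_ge_atTop ⌈t⌉₊] with n hn
  have hle : t ≤ ‖x (φ n) - p‖ := by
    calc t ≤ (⌈t⌉₊ : ℝ) := Nat.le_ceil t
    _ ≤ (n : ℝ) := by exact_mod_cast hn
    _ ≤ (φ n : ℝ) := by exact_mod_cast hφ.le_apply
    _ ≤ ‖x (φ n) - p‖ := (hxn (φ n)).le
  set m := φ n
  set s : ℝ := t / ‖x m - p‖ with hs
  have hs0 : 0 ≤ s := div_nonneg ht (hpos m).le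
  have hs1 : s ≤ 1 := (div_le_one (hpos m)).2 hle
  have hmem : (1 - s) • p + s • x m ∈ K := hK hp (hxK m) (by linarith) hs0 (by ring)
  have heq : p + t • u m = (1 - s) • p + s • x m := by
    have : t • u m = s • (x m - p) := by
      rw [hu, smul_smul, hs, div_eq_mul_inv, mul_comm]
    rw [this]
    module
  rw [heq]
  exact hmem

/-- A convex bi-curved set is bounded: if a convex set `C` admits, for some
unit vector `v`, two distinct supporting hyperplanes with normal `v`, each
meeting `closure C` in exactly one point, then `C` is bounded. -/
theorem stmt_12 {d : ℕ} (C : Set (EuclideanSpace ℝ (Fin d)))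
    (hC : Convex ℝ C)
    (hbicurved : ∃ (v : EuclideanSpace ℝ (Fin d)) (c₁ c₂ : ℝ), ‖v‖ = 1 ∧
      c₁ ≠ c₂ ∧
      (∀ x ∈ C, c₁ ≤ ⟪v, x⟫) ∧ (∀ x ∈ C, ⟪v, x⟫ ≤ c₂) ∧
      (∃! p, p ∈ closure C ∧ ⟪v, p⟫ = c₁) ∧
      (∃! p, p ∈ closure C ∧ ⟪v, p⟫ = c₂)) :
    Bornology.IsBounded C := by
  obtain ⟨v, c₁, c₂, hv, hne, h₁, h₂, ⟨p₁, ⟨hp₁K, hp₁c⟩, hp₁uniq⟩, -⟩ := hbicurved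
  by_contra hB
  have hKub : ¬ Bornology.IsBounded (closure C) := fun h => hB (h.subset subset_closure)
  obtain ⟨u, hu1, hray⟩ :=
    exists_ray_of_unbounded hC.closure isClosed_closure hKub hp₁K
  have hcont : Continuous fun x : EuclideanSpace ℝ (Fin d) => ⟪v, x⟫ :=
    continuous_const.inner continuous_id
  have hle1 : ∀ x ∈ closure C, c₁ ≤ ⟪v, x⟫ :=
    closure_minimal h₁ (isClosed_le continuous_const hcont)
  have hle2 : ∀ x ∈ closure C, ⟪v, x⟫ ≤ c₂ :=
    closure_minimal h₂ (isClosed_le hcont continuous_const)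
  have hinner : ∀ t : ℝ, 0 ≤ t → ⟪v, p₁ + t • u⟫ = c₁ + t * ⟪v, u⟫ := by
    intro t ht
    rw [inner_add_right, real_inner_smul_right, hp₁c]
  have ha : ⟪v, u⟫ = 0 := by
    set a : ℝ := ⟪v, u⟫ with hadef
    by_contra ha
    rcases lt_or_gt_of_ne ha with hlt | hlt
    · have ht : (0:ℝ) ≤ 1 / (-a) := le_of_lt (div_pos one_pos (neg_pos.2 hlt))
      have h1 := hle1 _ (hray _ ht)
      rw [hinner _ ht] at h1
      have hmul : 1 / (-a) * a = -1 := by field_simp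
      linarith
    · have hc : c₁ ≤ c₂ := by rw [← hp₁c]; exact hle2 _ hp₁K
      have ht : (0:ℝ) ≤ (c₂ - c₁ + 1) / a := le_of_lt (div_pos (by linarith) hlt)
      have h2 := hle2 _ (hray _ ht)
      rw [hinner _ ht] at h2
      have hmul : (c₂ - c₁ + 1) / a * a = c₂ - c₁ + 1 := div_mul_cancel₀ _ (ne_of_gt hlt)
      linarith
  have hmem : p₁ + (1:ℝ) • u ∈ closure C := hray 1 zero_le_one
  have heq : p₁ + (1:ℝ) • u = p₁ :=
    hp₁uniq _ ⟨hmem, by rw [hinner 1 zero_le_one, ha]; ring⟩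
  have hu0 : u = 0 := by
    have h := heq
    simp only [one_smul, add_eq_left] at h
    exact h
  rw [hu0, norm_zero] at hu1
  exact one_ne_zero hu1.symm
end
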